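/- Let (A, d, ·) be a dga and a ∈ A^{odd} with da + a·a = 0. Then the element R(a) := Σ_{n≥0} 1 ⊗ a^{⊗n}, viewed in the negative cyclic complex (C̄_•(A,A)[[u]], δ + uB), is a cycle: (δ + uB)(R(a)) = 0. In particular B(R(a)) = 0 in the normalized complex. -/

import Mathlib

/-!
Write `t_m = 1 ⊗ a ⊗ ⋯ ⊗ a ∈ A ⊗ Ā^{⊗m}`. Since `a` is odd, every bar `ā` has even shifted
degree, so all Koszul signs occurring in `δ t_m` are `+1`. The part of `δ` coming from `d` puts
`d a` into one bar slot (and kills the head, `d 1 = 0`); the part coming from the product puts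
`a · a` into one bar slot, while its two outer terms `1 · a ⊗ ⋯` and `a · 1 ⊗ ⋯` cancel. Slot by
slot these add up to `d a + a · a = 0`. Every term of `B t_m` carries the unit in a bar slot, so
it vanishes in the normalized complex. As `R(a)` lives in `u`-degree `0`, `(δ + uB) R(a) = 0`.
-/

open scoped TensorProduct

noncomputable section

/-- `Ā = A / k·1`. -/
abbrev HAbar (k A : Type) [Field k] [Ring A] [Algebra k A] : Type :=
  A ⧸ (Submodule.span k {(1 : A)})

/-- The degree-`n` part `A ⊗ Ā^{⊗n}` of the normalized Hochschild chain complex. -/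
abbrev HChains (k A : Type) [Field k] [Ring A] [Algebra k A] (n : ℕ) : Type :=
  A ⊗[k] (PiTensorProduct k (fun _ : Fin n => HAbar k A))

/-- The pure tensor `a₀ ⊗ ā₁ ⊗ ⋯ ⊗ āₙ`. -/
def hpt (k : Type) {A : Type} [Field k] [Ring A] [Algebra k A] {n : ℕ}
    (a : Fin (n + 1) → A) : HChains k A n :=
  a 0 ⊗ₜ[k] (PiTensorProduct.tprod k
    (fun i => (Submodule.Quotient.mk (a i.succ) : HAbar k A)))

section PureTensors

variable {k A : Type} [Field k] [Ring A] [Algebra k A]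

theorem hpt_eq_zero_of_head_eq_zero {n : ℕ} (a : Fin (n + 1) → A) (h : a 0 = 0) :
    hpt k a = 0 := by
  rw [hpt, h, TensorProduct.zero_tmul]

theorem hpt_eq_zero_of_mem_span_one {n : ℕ} (a : Fin (n + 1) → A) (j : Fin n)
    (h : a j.succ ∈ Submodule.span k {(1 : A)}) : hpt k a = 0 := by
  rw [hpt, MultilinearMap.map_coord_zero (PiTensorProduct.tprod k)
    (m := fun i => (Submodule.Quotient.mk (a i.succ) : HAbar k A)) j
    ((Submodule.Quotient.mk_eq_zero _).mpr h), TensorProduct.tmul_zero]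

theorem hpt_update_succ_add {n : ℕ} (a : Fin (n + 1) → A) (j : Fin n) (x y : A) :
    hpt k (Function.update a j.succ x) + hpt k (Function.update a j.succ y) =
      hpt k (Function.update a j.succ (x + y)) := by
  have hbar : ∀ z : A, (fun i : Fin n =>
      (Submodule.Quotient.mk (Function.update a j.succ z i.succ) : HAbar k A)) =
      Function.update (fun i => Submodule.Quotient.mk (a i.succ)) j (Submodule.Quotient.mk z) := by
    intro z
    ext i
    rcases eq_or_ne i j with rfl | hij
    · simp
    · simp [hij]
  simp only [hpt, Function.update_of_ne (Fin.succ_ne_zero j).symm, hbar,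
    Submodule.Quotient.mk_add, MultilinearMap.map_update_add, TensorProduct.tmul_add]

end PureTensors

theorem Fin.cons_mem_of_mem {R M : Type*} [Semiring R] [AddCommMonoid M] [Module R M] {n : ℕ}
    (𝒜 : ℤ → Submodule R M) {x : M} {e : ℤ} {b : Fin n → M} {f : Fin n → ℤ}
    (hx : x ∈ 𝒜 e) (hb : ∀ i, b i ∈ 𝒜 (f i)) (i : Fin (n + 1)) :
    (Fin.cons x b : Fin (n + 1) → M) i ∈ 𝒜 ((Fin.cons e f : Fin (n + 1) → ℤ) i) :=
  Fin.cases hx hb i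

theorem sum_ite_val_lt_const (D : ℤ) (n c : ℕ) :
    (∑ j : Fin n, if (j : ℕ) < c then D else 0) = (min n c : ℕ) * D := by
  rw [Finset.sum_ite, Finset.sum_const_zero, add_zero, Finset.sum_const, Fin.card_filter_val_lt,
    nsmul_eq_mul]

theorem neg_one_zpow_koszul_cons_zero_const (k : Type) [Field k] {D : ℤ} (hD : Odd D)
    {n c : ℕ} (hc : c ≤ n) :
    (-1 : k) ^ ((∑ j : Fin (n + 1),
        if (j : ℕ) < c + 1 then (Fin.cons 0 fun _ : Fin n => D : Fin (n + 1) → ℤ) j else 0) +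
        ((c + 1 : ℕ) : ℤ) - 1) = 1 := by
  have hsum : (∑ j : Fin (n + 1),
      if (j : ℕ) < c + 1 then (Fin.cons 0 fun _ : Fin n => D : Fin (n + 1) → ℤ) j else 0) =
      c * D := by
    simp only [Fin.sum_univ_succ, Fin.cons_zero, Fin.cons_succ, Fin.val_succ, Fin.val_zero,
      ite_self, zero_add, add_lt_add_iff_right, sum_ite_val_lt_const, min_eq_right hc]
  rw [hsum, show (c : ℤ) * D + ((c + 1 : ℕ) : ℤ) - 1 = c * (D + 1) by push_cast; ring]
  exact Even.neg_one_zpow (hD.add_one.mul_left _)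

section Formulas

variable {k A : Type} [Field k] [Ring A] [Algebra k A]

def InternalBoundaryFormula (𝒜 : ℤ → Submodule k A) (d : A →ₗ[k] A)
    (δd : ∀ m : ℕ, HChains k A m →ₗ[k] HChains k A m) : Prop :=
  ∀ (m : ℕ) (deg : Fin (m + 1) → ℤ) (a : Fin (m + 1) → A),
    (∀ i, a i ∈ 𝒜 (deg i)) →
    δd m (hpt k a) =
      ∑ i : Fin (m + 1),
        ((-1 : k) ^ (if (i : ℕ) = 0 then deg 0 else
            (∑ j : Fin (m + 1), if (j : ℕ) < (i : ℕ) then deg j else 0)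
              + ((i : ℕ) : ℤ) - 1)) •
          hpt k (Function.update a i (d (a i)))

def MulBoundaryFormula (𝒜 : ℤ → Submodule k A)
    (δm : ∀ m : ℕ, HChains k A (m + 1) →ₗ[k] HChains k A m) : Prop :=
  ∀ (m : ℕ) (deg : Fin (m + 2) → ℤ) (a : Fin (m + 2) → A),
    (∀ i, a i ∈ 𝒜 (deg i)) →
    δm m (hpt k a) =
      (∑ i : Fin (m + 1),
        ((-1 : k) ^ (if (i : ℕ) = 0 then deg 0 else
            (∑ j : Fin (m + 2), if (j : ℕ) < (i : ℕ) then deg j else 0)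
              + ((i : ℕ) : ℤ) - 1)) •
          hpt k (fun j : Fin (m + 1) =>
            if (j : ℕ) < (i : ℕ) then a (Fin.castSucc j)
            else if (j : ℕ) = (i : ℕ) then a (Fin.castSucc j) * a j.succ
            else a j.succ))
      - ((-1 : k) ^ ((deg (Fin.last (m + 1)) + 1) *
            ((∑ j : Fin (m + 2), if (j : ℕ) < m + 1 then deg j else 0) + (m : ℤ)))) •
          hpt k (fun j : Fin (m + 1) =>
            if (j : ℕ) = 0 then a (Fin.last (m + 1)) * a 0
            else a (Fin.castSucc j))

def ConnesOperatorFormula (𝒜 : ℤ → Submodule k A)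
    (Bup : ∀ m : ℕ, HChains k A m →ₗ[k] HChains k A (m + 1)) : Prop :=
  ∀ (m : ℕ) (deg : Fin (m + 1) → ℤ) (a : Fin (m + 1) → A),
    (∀ i, a i ∈ 𝒜 (deg i)) →
    Bup m (hpt k a) =
      ∑ i : Fin (m + 1),
        ((-1 : k) ^
          (((∑ j : Fin (m + 1), if (i : ℕ) ≤ (j : ℕ) then deg j else 0)
              + (m : ℤ) - ((i : ℕ) : ℤ) + 1) *
           ((∑ j : Fin (m + 1), if (j : ℕ) < (i : ℕ) then deg j else 0)
              + ((i : ℕ) : ℤ) - 1))) •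
          hpt k (Fin.cons (1 : A) (fun j : Fin (m + 1) => a (i + j)))

end Formulas

section MaurerCartan

variable {k A : Type} [Field k] [Ring A] [Algebra k A] {𝒜 : ℤ → Submodule k A}

/-- Every term of `B(a₀ ⊗ ⋯)` places `a₀` in a bar slot; it dies there when `a₀ = 1`. -/
theorem connesOperator_hpt_eq_zero_of_head_eq_one
    {Bup : ∀ m : ℕ, HChains k A m →ₗ[k] HChains k A (m + 1)} (hB : ConnesOperatorFormula 𝒜 Bup)
    {m : ℕ} (deg : Fin (m + 1) → ℤ) (t : Fin (m + 1) → A) (ht : ∀ i, t i ∈ 𝒜 (deg i))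
    (h0 : t 0 = 1) : Bup m (hpt k t) = 0 := by
  rw [hB m deg t ht]
  refine Finset.sum_eq_zero fun i _ => ?_
  have hslot : (Fin.cons (1 : A) fun j : Fin (m + 1) => t (i + j) : Fin (m + 2) → A) (-i).succ ∈
      Submodule.span k {(1 : A)} := by
    rw [Fin.cons_succ, add_neg_cancel, h0]
    exact Submodule.mem_span_singleton_self 1
  rw [hpt_eq_zero_of_mem_span_one _ (-i) hslot, smul_zero]

variable {d : A →ₗ[k] A} {a : A} {D : ℤ}

theorem internalBoundary_hpt_cons_one_const
    {δd : ∀ m : ℕ, HChains k A m →ₗ[k] HChains k A m} (hδd : InternalBoundaryFormula 𝒜 d δd)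
    (hone : (1 : A) ∈ 𝒜 0) (hd1 : d 1 = 0) (ha : a ∈ 𝒜 D) (hD : Odd D) (m : ℕ) :
    δd m (hpt k (Fin.cons (1 : A) fun _ : Fin m => a)) =
      ∑ i : Fin m, hpt k (Function.update (Fin.cons (1 : A) fun _ : Fin m => a) i.succ (d a)) := by
  rw [hδd m _ _ (Fin.cons_mem_of_mem 𝒜 hone fun _ => ha), Fin.sum_univ_succ,
    hpt_eq_zero_of_head_eq_zero _ (by simp [hd1]), smul_zero, zero_add]
  refine Finset.sum_congr rfl fun i _ => ?_
  rw [Fin.val_succ, if_neg (Nat.succ_ne_zero i),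
    neg_one_zpow_koszul_cons_zero_const k hD i.is_lt.le, one_smul, Fin.cons_succ]

theorem mulBoundary_hpt_cons_one_const
    {δm : ∀ m : ℕ, HChains k A (m + 1) →ₗ[k] HChains k A m} (hδm : MulBoundaryFormula 𝒜 δm)
    (hone : (1 : A) ∈ 𝒜 0) (ha : a ∈ 𝒜 D) (hD : Odd D) (m : ℕ) :
    δm m (hpt k (Fin.cons (1 : A) fun _ : Fin (m + 1) => a)) =
      ∑ i : Fin m, hpt k (Function.update (Fin.cons (1 : A) fun _ : Fin m => a) i.succ (a * a)) := by
  set t : Fin (m + 2) → A := Fin.cons 1 fun _ => a with ht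
  have hfirst : (fun j : Fin (m + 1) =>
      if (j : ℕ) < ((0 : Fin (m + 1)) : ℕ) then t (Fin.castSucc j)
      else if (j : ℕ) = ((0 : Fin (m + 1)) : ℕ) then t (Fin.castSucc j) * t j.succ
      else t j.succ) = fun _ => a := by
    ext j
    refine Fin.cases ?_ (fun j => ?_) j <;> simp [ht]
  have hmiddle : ∀ i : Fin m, (fun j : Fin (m + 1) =>
      if (j : ℕ) < (i.succ : ℕ) then t (Fin.castSucc j)
      else if (j : ℕ) = (i.succ : ℕ) then t (Fin.castSucc j) * t j.succ
      else t j.succ) = Function.update (Fin.cons (1 : A) fun _ : Fin m => a) i.succ (a * a) := by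
    intro i
    ext j
    refine Fin.cases ?_ (fun j => ?_) j
    · simp [ht, (Fin.succ_ne_zero i).symm]
    · rcases lt_trichotomy j i with h | rfl | h
      · simp [ht, h, Fin.ne_of_lt h]
      · simp [ht]
      · simp [ht, not_lt.mpr h.le, Fin.val_ne_of_ne h.ne', h.ne']
  have hcyclic : (fun j : Fin (m + 1) =>
      if (j : ℕ) = 0 then t (Fin.last (m + 1)) * t 0 else t (Fin.castSucc j)) = fun _ => a := by
    ext j
    refine Fin.cases ?_ (fun j => ?_) j
    · simp [ht, ← Fin.succ_last]
    · simp [ht]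
  -- the outer terms `1·a ⊗ a ⊗ ⋯` and `a·1 ⊗ a ⊗ ⋯` cancel, the sign of the latter being even
  rw [hδm m _ t (Fin.cons_mem_of_mem 𝒜 hone fun _ => ha), Fin.sum_univ_succ, hfirst, hcyclic,
    ← Fin.succ_last, Fin.cons_succ, Even.neg_one_zpow (hD.add_one.mul_right _)]
  simp only [Fin.val_zero, if_true, Fin.cons_zero, zpow_zero, one_smul, add_sub_cancel_left]
  refine Finset.sum_congr rfl fun i _ => ?_
  rw [hmiddle, Fin.val_succ, if_neg (Nat.succ_ne_zero i),
    neg_one_zpow_koszul_cons_zero_const k hD (i.is_lt.le.trans m.le_succ), one_smul]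

theorem hochschildBoundary_hpt_cons_one_const_eq_zero
    {δd : ∀ m : ℕ, HChains k A m →ₗ[k] HChains k A m}
    {δm : ∀ m : ℕ, HChains k A (m + 1) →ₗ[k] HChains k A m}
    (hδd : InternalBoundaryFormula 𝒜 d δd) (hδm : MulBoundaryFormula 𝒜 δm)
    (hone : (1 : A) ∈ 𝒜 0) (hd1 : d 1 = 0) (ha : a ∈ 𝒜 D) (hD : Odd D)
    (hMC : d a + a * a = 0) (m : ℕ) :
    δd m (hpt k (Fin.cons (1 : A) fun _ : Fin m => a)) +
      δm m (hpt k (Fin.cons (1 : A) fun _ : Fin (m + 1) => a)) = 0 := by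
  rw [internalBoundary_hpt_cons_one_const hδd hone hd1 ha hD,
    mulBoundary_hpt_cons_one_const hδm hone ha hD, ← Finset.sum_add_distrib]
  refine Finset.sum_eq_zero fun i _ => ?_
  rw [hpt_update_succ_add, hMC]
  exact hpt_eq_zero_of_mem_span_one _ i (by simp)

end MaurerCartan

/-- Negative cyclic chains are modelled as `c : ℕ → ∀ m, A ⊗ Ā^{⊗m}` (`c i` is the coefficient of
`uⁱ`), with `((δ + uB) c) i = δ (c i) + B (c (i-1))`, stated through the graded components
`δd`, `δm` of the Hochschild boundary and `Bup` of Connes' operator. -/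
theorem R_of_MC_element_is_negative_cyclic_cycle_general
    (k A : Type) [Field k] [Ring A] [Algebra k A]
    (𝒜 : ℤ → Submodule k A)
    (hone : (1 : A) ∈ 𝒜 0)
    (d : A →ₗ[k] A) (hd1 : d 1 = 0)
    (δd : ∀ m : ℕ, HChains k A m →ₗ[k] HChains k A m)
    (δm : ∀ m : ℕ, HChains k A (m + 1) →ₗ[k] HChains k A m)
    (Bup : ∀ m : ℕ, HChains k A m →ₗ[k] HChains k A (m + 1))
    (hδd : ∀ (m : ℕ) (deg : Fin (m + 1) → ℤ) (a : Fin (m + 1) → A),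
      (∀ i, a i ∈ 𝒜 (deg i)) →
      δd m (hpt k a) =
        ∑ i : Fin (m + 1),
          ((-1 : k) ^ (if (i : ℕ) = 0 then deg 0 else
              (∑ j : Fin (m + 1), if (j : ℕ) < (i : ℕ) then deg j else 0)
                + ((i : ℕ) : ℤ) - 1)) •
            hpt k (Function.update a i (d (a i))))
    (hδm : ∀ (m : ℕ) (deg : Fin (m + 2) → ℤ) (a : Fin (m + 2) → A),
      (∀ i, a i ∈ 𝒜 (deg i)) →
      δm m (hpt k a) =
        (∑ i : Fin (m + 1),
          ((-1 : k) ^ (if (i : ℕ) = 0 then deg 0 else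
              (∑ j : Fin (m + 2), if (j : ℕ) < (i : ℕ) then deg j else 0)
                + ((i : ℕ) : ℤ) - 1)) •
            hpt k (fun j : Fin (m + 1) =>
              if (j : ℕ) < (i : ℕ) then a (Fin.castSucc j)
              else if (j : ℕ) = (i : ℕ) then a (Fin.castSucc j) * a j.succ
              else a j.succ))
        - ((-1 : k) ^ ((deg (Fin.last (m + 1)) + 1) *
              ((∑ j : Fin (m + 2), if (j : ℕ) < m + 1 then deg j else 0) + (m : ℤ)))) •
            hpt k (fun j : Fin (m + 1) =>
              if (j : ℕ) = 0 then a (Fin.last (m + 1)) * a 0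
              else a (Fin.castSucc j)))
    -- Connes' operator on pure tensors
    (hB : ∀ (m : ℕ) (deg : Fin (m + 1) → ℤ) (a : Fin (m + 1) → A),
      (∀ i, a i ∈ 𝒜 (deg i)) →
      Bup m (hpt k a) =
        ∑ i : Fin (m + 1),
          ((-1 : k) ^
            (((∑ j : Fin (m + 1), if (i : ℕ) ≤ (j : ℕ) then deg j else 0)
                + (m : ℤ) - ((i : ℕ) : ℤ) + 1) *
             ((∑ j : Fin (m + 1), if (j : ℕ) < (i : ℕ) then deg j else 0)
                + ((i : ℕ) : ℤ) - 1))) •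
            hpt k (Fin.cons (1 : A) (fun j : Fin (m + 1) => a (i + j))))
    (a : A) (D : ℤ) (ha : a ∈ 𝒜 D) (hD : Odd D)   -- a ∈ A^{odd}
    (hMC : d a + a * a = 0)                         -- Maurer-Cartan equation
    -- R(a) = Σ_{n≥0} 1 ⊗ a^{⊗n} at u⁰:
    (R : ℕ → ∀ m : ℕ, HChains k A m)
    (hR : ∀ m : ℕ, R 0 m = hpt k (Fin.cons (1 : A) (fun _ : Fin m => a)))
    (hR' : ∀ i : ℕ, 0 < i → ∀ m, R i m = 0) :
    -- (δ + uB)(R(a)) = 0 :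
    (∀ (i m : ℕ),
      δd m (R i m) + δm m (R i (m + 1)) +
        (Nat.rec (motive := fun m => HChains k A m) 0
          (fun m' _ => Bup m' (Nat.rec (motive := fun _ => ∀ l, HChains k A l)
              (fun l => 0) (fun i' _ => R i') i m'))
          m) = 0)
    -- in particular B(R(a)) = 0 in the normalized complex:
    ∧ (∀ m : ℕ, Bup m (hpt k (Fin.cons (1 : A) (fun _ : Fin m => a))) = 0) := by
  have hB0 : ∀ m : ℕ, Bup m (hpt k (Fin.cons (1 : A) fun _ : Fin m => a)) = 0 := fun m =>
    connesOperator_hpt_eq_zero_of_head_eq_one hB _ _ (Fin.cons_mem_of_mem 𝒜 hone fun _ => ha) rfl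
  have hδ : ∀ i m : ℕ, δd m (R i m) + δm m (R i (m + 1)) = 0 := by
    rintro (_ | i) m
    · rw [hR, hR]
      exact hochschildBoundary_hpt_cons_one_const_eq_zero hδd hδm hone hd1 ha hD hMC m
    · rw [hR' _ i.succ_pos, hR' _ i.succ_pos, map_zero, map_zero, add_zero]
  refine ⟨fun i m => ?_, hB0⟩
  rw [hδ, zero_add]
  -- the `Nat.rec` term is `Bup (m - 1) (R (i - 1) (m - 1))`, read as `0` if `i = 0` or `m = 0`
  rcases m with _ | m
  · rfl
  rcases i with _ | _ | i
  · exact map_zero _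
  · show Bup m (R 0 m) = 0
    rw [hR, hB0]
  · show Bup m (R (i + 1) m) = 0
    rw [hR' _ i.succ_pos, map_zero]

/-- For a dga `A` and `a ∈ A^{odd}` with `da + a·a = 0`, the element
`R(a) = Σ_{n≥0} 1 ⊗ a^{⊗n}`, included at `u⁰` into the negative cyclic complex
`(C̄_•(A,A)[[u]], δ + uB)`, is a cycle: `(δ + uB)(R(a)) = 0`; in particular `B(R(a)) = 0`.
Negative cyclic chains are modelled as `c : ℕ → ∀ m, A ⊗ Ā^{⊗m}` (`c i` is the coefficient of
`uⁱ`), with `((δ + uB) c) i = δ (c i) + B (c (i-1))`, stated through the graded components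
`δd`, `δm` of the Hochschild boundary and `Bup` of Connes' operator. -/
theorem R_of_MC_element_is_negative_cyclic_cycle
    (k A : Type) [Field k] [Ring A] [Algebra k A]
    (𝒜 : ℤ → Submodule k A)
    (hone : (1 : A) ∈ 𝒜 0)
    (hmul : ∀ (i j : ℤ) (x y : A), x ∈ 𝒜 i → y ∈ 𝒜 j → x * y ∈ 𝒜 (i + j))
    (hinternal : DirectSum.IsInternal 𝒜)
    (d : A →ₗ[k] A) (hd1 : d 1 = 0) (hdd : ∀ x, d (d x) = 0)
    (hd_deg : ∀ (i : ℤ) (x : A), x ∈ 𝒜 i → d x ∈ 𝒜 (i + 1))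
    (hLeib : ∀ (i : ℤ) (x y : A), x ∈ 𝒜 i → d (x * y) = d x * y + ((-1 : k) ^ i) • (x * d y))
    (δd : ∀ m : ℕ, HChains k A m →ₗ[k] HChains k A m)
    (δm : ∀ m : ℕ, HChains k A (m + 1) →ₗ[k] HChains k A m)
    (Bup : ∀ m : ℕ, HChains k A m →ₗ[k] HChains k A (m + 1))
    (hδd : ∀ (m : ℕ) (deg : Fin (m + 1) → ℤ) (a : Fin (m + 1) → A),
      (∀ i, a i ∈ 𝒜 (deg i)) →
      δd m (hpt k a) =
        ∑ i : Fin (m + 1),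
          ((-1 : k) ^ (if (i : ℕ) = 0 then deg 0 else
              (∑ j : Fin (m + 1), if (j : ℕ) < (i : ℕ) then deg j else 0)
                + ((i : ℕ) : ℤ) - 1)) •
            hpt k (Function.update a i (d (a i))))
    (hδm : ∀ (m : ℕ) (deg : Fin (m + 2) → ℤ) (a : Fin (m + 2) → A),
      (∀ i, a i ∈ 𝒜 (deg i)) →
      δm m (hpt k a) =
        (∑ i : Fin (m + 1),
          ((-1 : k) ^ (if (i : ℕ) = 0 then deg 0 else
              (∑ j : Fin (m + 2), if (j : ℕ) < (i : ℕ) then deg j else 0)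
                + ((i : ℕ) : ℤ) - 1)) •
            hpt k (fun j : Fin (m + 1) =>
              if (j : ℕ) < (i : ℕ) then a (Fin.castSucc j)
              else if (j : ℕ) = (i : ℕ) then a (Fin.castSucc j) * a j.succ
              else a j.succ))
        - ((-1 : k) ^ ((deg (Fin.last (m + 1)) + 1) *
              ((∑ j : Fin (m + 2), if (j : ℕ) < m + 1 then deg j else 0) + (m : ℤ)))) •
            hpt k (fun j : Fin (m + 1) =>
              if (j : ℕ) = 0 then a (Fin.last (m + 1)) * a 0
              else a (Fin.castSucc j)))
    -- Connes' operator on pure tensors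
    (hB : ∀ (m : ℕ) (deg : Fin (m + 1) → ℤ) (a : Fin (m + 1) → A),
      (∀ i, a i ∈ 𝒜 (deg i)) →
      Bup m (hpt k a) =
        ∑ i : Fin (m + 1),
          ((-1 : k) ^
            (((∑ j : Fin (m + 1), if (i : ℕ) ≤ (j : ℕ) then deg j else 0)
                + (m : ℤ) - ((i : ℕ) : ℤ) + 1) *
             ((∑ j : Fin (m + 1), if (j : ℕ) < (i : ℕ) then deg j else 0)
                + ((i : ℕ) : ℤ) - 1))) •
            hpt k (Fin.cons (1 : A) (fun j : Fin (m + 1) => a (i + j))))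
    (a : A) (D : ℤ) (ha : a ∈ 𝒜 D) (hD : Odd D)   -- a ∈ A^{odd}
    (hMC : d a + a * a = 0)                         -- Maurer-Cartan equation
    -- R(a) = Σ_{n≥0} 1 ⊗ a^{⊗n} at u⁰:
    (R : ℕ → ∀ m : ℕ, HChains k A m)
    (hR : ∀ m : ℕ, R 0 m = hpt k (Fin.cons (1 : A) (fun _ : Fin m => a)))
    (hR' : ∀ i : ℕ, 0 < i → ∀ m, R i m = 0) :
    -- (δ + uB)(R(a)) = 0 :
    (∀ (i m : ℕ),
      δd m (R i m) + δm m (R i (m + 1)) +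
        (Nat.rec (motive := fun m => HChains k A m) 0
          (fun m' _ => Bup m' (Nat.rec (motive := fun _ => ∀ l, HChains k A l)
              (fun l => 0) (fun i' _ => R i') i m'))
          m) = 0)
    -- in particular B(R(a)) = 0 in the normalized complex:
    ∧ (∀ m : ℕ, Bup m (hpt k (Fin.cons (1 : A) (fun _ : Fin m => a))) = 0) :=
  R_of_MC_element_is_negative_cyclic_cycle_general k A 𝒜 hone d hd1 δd δm Bup hδd hδm hB a D ha hD
    hMC R hR hR'
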